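/- Let k be a field of characteristic 2, and consider the right action of the affine group k* ⋊ k on N = k* × k × k × (k/AS(k)) given by (a,b,c,d)^{(λ,ν)} = (λ⁵a, λ⁴(b + E_{a,c}(ν)), λ³c, d + aν⁵ + bν⁴ + cν³). Then the stabilizer of any point (a,b,c,d) ∈ N equals Ker(δ_{abc}) = {(λ,ν) ∈ Γ_{abc} : aν⁵ + bν⁴ + cν³ ∈ AS(k)}. -/

import Mathlib

/-- The image of the Artin–Schreier map `x ↦ x + x²` of a field of characteristic 2,
as an additive subgroup. -/
def ASrange (k : Type*) [Field k] [CharP k 2] : AddSubgroup k where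
  carrier := Set.range fun x : k => x + x ^ 2
  zero_mem' := ⟨0, by ring⟩
  add_mem' := by
    rintro _ _ ⟨x, rfl⟩ ⟨y, rfl⟩
    refine ⟨x + y, ?_⟩
    have h2 : (2 : k) = 0 := by exact_mod_cast CharP.cast_eq_zero k 2
    linear_combination (x * y) * h2
  neg_mem' := by
    rintro _ ⟨x, rfl⟩
    refine ⟨x, ?_⟩
    have h2 : (2 : k) = 0 := by exact_mod_cast CharP.cast_eq_zero k 2
    linear_combination (x + x ^ 2) * h2

/-- The affine group `k* ⋊ k`: pairs `(λ, ν)` with multiplication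
`(λ,ν)·(λ′,ν′) = (λλ′, λν′ + ν)`, i.e. composition of the affine maps `x ↦ λx + ν`. -/
@[ext]
structure Aff (k : Type*) [Field k] where
  fst : kˣ
  snd : k

namespace Aff

variable {k : Type*} [Field k]

instance : Mul (Aff k) := ⟨fun g h => ⟨g.fst * h.fst, (g.fst : k) * h.snd + g.snd⟩⟩
instance : One (Aff k) := ⟨⟨1, 0⟩⟩
instance : Inv (Aff k) := ⟨fun g => ⟨g.fst⁻¹, -((g.fst⁻¹ : k) * g.snd)⟩⟩

@[simp] theorem mul_fst (g h : Aff k) : (g * h).fst = g.fst * h.fst := rfl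
@[simp] theorem mul_snd (g h : Aff k) : (g * h).snd = (g.fst : k) * h.snd + g.snd := rfl
@[simp] theorem one_fst : (1 : Aff k).fst = 1 := rfl
@[simp] theorem one_snd : (1 : Aff k).snd = 0 := rfl
@[simp] theorem inv_fst (g : Aff k) : (g⁻¹).fst = g.fst⁻¹ := rfl
@[simp] theorem inv_snd (g : Aff k) : (g⁻¹).snd = -((g.fst⁻¹ : k) * g.snd) := rfl

instance : Group (Aff k) where
  mul_assoc a b c := by
    ext
    · simp [mul_assoc]
    · simp; ring
  one_mul a := by ext <;> simp
  mul_one a := by ext <;> simp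
  inv_mul_cancel a := by
    ext
    · simp
    · have h : (a.fst : k) ≠ 0 := Units.ne_zero _
      simp only [mul_snd, inv_snd, one_snd, inv_fst, Units.val_inv_eq_inv_val]; ring

end Aff

/-- The additive polynomial `E_{a,c}(x) = a⁴x¹⁶ + c⁴x⁸ + c²x² + ax`. -/
def Efun {k : Type*} [Field k] (a c x : k) : k :=
  a ^ 4 * x ^ 16 + c ^ 4 * x ^ 8 + c ^ 2 * x ^ 2 + a * x

open scoped Classical

/-- The subset `Γ_{abc}` of the affine group `k* ⋊ k`: for `c ≠ 0` it is
`{(1,ν) : E_{a,c}(ν) = 0}`, and for `c = 0` it is `{(λ,ν) : λ⁵ = 1, E_{a,c}(ν) = b(1+λ)}`. -/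
def GammaSet {k : Type*} [Field k] (a : kˣ) (b c : k) : Set (Aff k) :=
  {g | if c = 0 then ((g.fst : k) ^ 5 = 1 ∧ Efun (a : k) c g.snd = b * (1 + (g.fst : k)))
       else (g.fst = 1 ∧ Efun (a : k) c g.snd = 0)}

/-- The map `δ_{abc} : Γ_{abc} → k/AS(k)`, `(λ,ν) ↦ aν⁵ + bν⁴ + cν³ mod AS(k)`. -/
def deltaMap {k : Type*} [Field k] [CharP k 2] (a : kˣ) (b c : k) (g : Aff k) :
    k ⧸ ASrange k :=
  QuotientAddGroup.mk ((a : k) * g.snd ^ 5 + b * g.snd ^ 4 + c * g.snd ^ 3)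

/-- The right action of the affine group `k* ⋊ k` on
`N = k* × k × k × (k/AS(k))` given by
`(a,b,c,d)^{(λ,ν)} = (λ⁵a, λ⁴(b + E_{a,c}(ν)), λ³c, d + aν⁵ + bν⁴ + cν³)`. -/
def actAff {k : Type*} [Field k] [CharP k 2]
    (n : kˣ × k × k × (k ⧸ ASrange k)) (g : Aff k) : kˣ × k × k × (k ⧸ ASrange k) :=
  (g.fst ^ 5 * n.1,
   (g.fst : k) ^ 4 * (n.2.1 + Efun (n.1 : k) n.2.2.1 g.snd),
   (g.fst : k) ^ 3 * n.2.2.1,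
   n.2.2.2 + QuotientAddGroup.mk
      ((n.1 : k) * g.snd ^ 5 + n.2.1 * g.snd ^ 4 + n.2.2.1 * g.snd ^ 3))

/-- Let `k` be a field of characteristic 2.  For the right action of the
affine group `k* ⋊ k` on `N = k* × k × k × (k/AS(k))` given by
`(a,b,c,d)^{(λ,ν)} = (λ⁵a, λ⁴(b + E_{a,c}(ν)), λ³c, d + aν⁵ + bν⁴ + cν³)`, the stabilizer of
any `(a,b,c,d) ∈ N` equals `Ker(δ_{abc}) = {(λ,ν) ∈ Γ_{abc} : aν⁵ + bν⁴ + cν³ ∈ AS(k)}`. -/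
theorem stabilizer_actAff_eq_ker_delta {k : Type*} [Field k] [CharP k 2]
    (n : kˣ × k × k × (k ⧸ ASrange k)) :
    {g : Aff k | actAff n g = n}
      = {g : Aff k | g ∈ GammaSet n.1 n.2.1 n.2.2.1 ∧
          (n.1 : k) * g.snd ^ 5 + n.2.1 * g.snd ^ 4 + n.2.2.1 * g.snd ^ 3 ∈ ASrange k} := by
  ext g
  obtain ⟨a, b, c, d⟩ := n
  have hchar : (2 : k) = 0 := by exact_mod_cast CharP.cast_eq_zero k 2
  have hl0 : (g.fst : k) ≠ 0 := Units.ne_zero _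
  simp only [Set.mem_setOf_eq, actAff, Prod.mk.injEq, GammaSet]
  constructor
  · rintro ⟨h1, h2, h3, h4⟩
    have hl5 : (g.fst : k) ^ 5 = 1 := by
      have h1' : g.fst ^ 5 = 1 := by
        have h1'' : g.fst ^ 5 * a = 1 * a := by rw [h1, one_mul]
        exact mul_right_cancel h1''
      have := congrArg (Units.val) h1'
      push_cast at this
      exact this
    have hmem : (a : k) * g.snd ^ 5 + b * g.snd ^ 4 + c * g.snd ^ 3 ∈ ASrange k := by
      have h4' : (QuotientAddGroup.mk ((a : k) * g.snd ^ 5 + b * g.snd ^ 4 + c * g.snd ^ 3)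
          : k ⧸ ASrange k) = 0 := by
        have := h4
        rwa [add_eq_left] at this
      exact (QuotientAddGroup.eq_zero_iff _).mp h4'
    refine ⟨?_, hmem⟩
    by_cases hc : c = 0
    · simp only [hc, if_true]
      refine ⟨hl5, ?_⟩
      have h2' : (g.fst : k) ^ 4 * (b + Efun (a : k) c g.snd) = b := h2
      subst hc
      linear_combination (g.fst : k) * h2' - (b + Efun (a:k) 0 g.snd) * hl5 - b * hchar
    · simp only [hc, if_false]
      have hl3 : (g.fst : k) ^ 3 = 1 := by
        have h3' : (g.fst : k) ^ 3 * c = 1 * c := by rw [h3, one_mul]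
        exact mul_right_cancel₀ hc h3'
      have hl1 : (g.fst : k) = 1 := by
        have h2k : (g.fst : k) ^ 2 = 1 := by
          have : (g.fst : k) ^ 2 * (g.fst : k) ^ 3 = 1 := by rw [← pow_add]; exact hl5
          rw [hl3, mul_one] at this; exact this
        have : (g.fst : k) * (g.fst : k) ^ 2 = 1 := by rw [← pow_succ']; exact hl3
        rw [h2k, mul_one] at this; exact this
      have hfst : g.fst = 1 := Units.ext (by simpa using hl1)
      refine ⟨hfst, ?_⟩
      rw [hl1] at h2
      have h2' : (1 : k) * (b + Efun (a : k) c g.snd) = b := by simpa using h2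
      rw [one_mul, add_eq_left] at h2'
      exact h2'
  · rintro ⟨hΓ, hmem⟩
    by_cases hc : c = 0
    · simp only [hc, if_true] at hΓ
      obtain ⟨hl5, hE⟩ := hΓ
      subst hc
      refine ⟨?_, ?_, by ring, ?_⟩
      · have : g.fst ^ 5 = 1 := Units.ext (by push_cast; exact hl5)
        rw [this, one_mul]
      · linear_combination (g.fst : k)^4 * hE + b * hl5 + ((g.fst:k)^4 * b) * hchar
      · rw [add_eq_left, QuotientAddGroup.eq_zero_iff]
        exact hmem
    · simp only [hc, if_false] at hΓ
      obtain ⟨hfst, hE⟩ := hΓ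
      have hl1 : (g.fst : k) = 1 := by rw [hfst]; rfl
      refine ⟨?_, ?_, ?_, ?_⟩
      · rw [hfst, one_pow, one_mul]
      · rw [hl1, one_pow, one_mul, hE, add_zero]
      · rw [hl1, one_pow, one_mul]
      · rw [add_eq_left, QuotientAddGroup.eq_zero_iff]
        exact hmem
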